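/- Let H0, H* ∈ H^stub_s(d) with E(M(H0 Δ H*)) = k+1 ≥ 5, and suppose M(H0 Δ H*) consists of exactly one minimal alternating cycle C* containing the edges e1 = {a,b}_{H0,t}, e2 = {b,c}_{H*,t}, e4 = {a,d}_{H0,s} and e5 = {a,f}_{H*,u} with a, b, c, d, f pairwise distinct. If the hyperarc (u,{f,c}) belongs to A(H0) ∩ A(H*), then the hypergraph H̃ with A(H̃) = (A(H0) \ {M⁻¹(e1), (u,{f,c})}) ∪ {M⁻¹(e2), M⁻¹(e5)} satisfies: H̃ ∈ H^stub_s(d), E(M(H0 Δ H̃)) ≤ k, and E(M(H̃ Δ H*)) = k−1. -/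
import Mathlib


open Finset

/-!
Common setting: fix a vertex set `V` and two tail labels `τ, σ`, encoded as
`Bool` with `true = τ` and `false = σ`.  A hyperarc is a pair `(t, {a,b})`
consisting of a tail label and an unordered pair of vertices; it is degenerate
if `a = b`.  A hypergraph is a finite set of pairwise distinct non-degenerate
hyperarcs; `H^stub_s(d)` is the set of such hypergraphs realizing the degree
sequence `d` (stub degree of each vertex and number of hyperarcs per tail).
`M(H0 Δ H*)` is the edge-labeled multigraph whose edges record the hyperarcs
of the symmetric difference together with the hypergraph (`lab`, `true = H0`)
containing them and their tail.
-/

/-- Tail labels: `true = τ`, `false = σ`. -/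
abbrev Tail := Bool

/-- A hyperarc: a tail label together with an unordered pair of vertices. -/
abbrev Hyperarc (V : Type*) := Tail × Sym2 V

/-- A (stub) degree sequence: the stub degree of every vertex together with the
number of hyperarcs carrying each tail label. -/
structure DegreeSeq (V : Type*) where
  vdeg : V → ℕ
  tdeg : Tail → ℕ

/-- `A` is a hypergraph in `H^stub_s(d)`: a set of pairwise distinct (this is
automatic for a `Finset`) non-degenerate hyperarcs realizing the degree
sequence `D`. -/
def Realizes {V : Type*} [DecidableEq V] (A : Finset (Hyperarc V)) (D : DegreeSeq V) : Prop :=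
  (∀ e ∈ A, ¬ e.2.IsDiag) ∧
  (∀ v : V, (A.filter fun e => v ∈ e.2).card = D.vdeg v) ∧
  (∀ t : Tail, (A.filter fun e => e.1 = t).card = D.tdeg t)

/-- An edge `{a,b}_{X,t}` of the multigraph `M(H0 Δ H*)`: its label (`true`
means it comes from `H0`, `false` from `H*`), its tail `t` and its endpoints
`{a,b}`. -/
structure MEdge (V : Type*) where
  lab : Bool
  tail : Tail
  ends : Sym2 V
deriving DecidableEq

/-- `M⁻¹`: the hyperarc underlying an edge of `M(H0 Δ H*)`. -/
def MEdge.arc {V : Type*} (e : MEdge V) : Hyperarc V := (e.tail, e.ends)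

/-- The edge set of the edge-labeled multigraph `M(H0 Δ H*)`: every hyperarc of
`A(H0) \ A(H*)` becomes an edge labeled `H0` (i.e. `true`) and every hyperarc of
`A(H*) \ A(H0)` becomes an edge labeled `H*` (i.e. `false`). -/
def mEdges {V : Type*} [DecidableEq V] (A0 A1 : Finset (Hyperarc V)) : Finset (MEdge V) :=
  ((A0 \ A1).image fun h => ⟨true, h.1, h.2⟩) ∪
    ((A1 \ A0).image fun h => ⟨false, h.1, h.2⟩)

/-- An alternating cycle in the edge set `E` of `M(H0 Δ H*)`: a closed trail
(cyclic sequence of pairwise distinct edges, consecutive edges sharing an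
endpoint) whose edges alternate between label `H0` and label `H*`. -/
structure AltCycle {V : Type*} (E : Finset (MEdge V)) where
  /-- the length of the cycle -/
  n : ℕ
  two_le : 2 ≤ n
  /-- the cyclic sequence of edges -/
  edge : ℕ → MEdge V
  /-- the cyclic sequence of vertices visited -/
  vert : ℕ → V
  edge_periodic : ∀ i, edge (i + n) = edge i
  vert_periodic : ∀ i, vert (i + n) = vert i
  mem : ∀ i, edge i ∈ E
  inj : ∀ i < n, ∀ j < n, edge i = edge j → i = j
  ends_eq : ∀ i, (edge i).ends = s(vert i, vert (i + 1))
  alt : ∀ i, (edge i).lab = !(edge (i + 1)).lab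

/-- The set of edges used by an alternating cycle. -/
def AltCycle.edges {V : Type*} [DecidableEq V] {E : Finset (MEdge V)} (C : AltCycle E) :
    Finset (MEdge V) :=
  (Finset.range C.n).image C.edge

/-- A minimal alternating cycle: one containing no proper alternating subcycle. -/
def AltCycle.Minimal {V : Type*} [DecidableEq V] {E : Finset (MEdge V)} (C : AltCycle E) : Prop :=
  ∀ C' : AltCycle E, C'.edges ⊆ C.edges → C'.edges = C.edges

/-- `|f_{X,t}(M(H0 Δ H*))|`: the number of edges of `M(H0 Δ H*)` labeled with
hypergraph `l` (`true = H0`) and tail `t`. -/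
def labTailCount {V : Type*} [DecidableEq V] (A0 A1 : Finset (Hyperarc V))
    (l : Bool) (t : Tail) : ℕ :=
  ((mEdges A0 A1).filter fun e => e.lab = l ∧ e.tail = t).card

/-- `H` and `H'` differ by a single hypershuffle move, i.e. they are adjacent in
`G(H^stub_s(d))`: their symmetric difference consists of 4 hyperarcs,
`M(H Δ H')` is an alternating cycle, and the number of tail-τ edges labeled `H`
equals the number of tail-τ edges labeled `H'`. -/
def HypershuffleAdj {V : Type*} [DecidableEq V] (A0 A1 : Finset (Hyperarc V)) : Prop :=
  ((A0 \ A1) ∪ (A1 \ A0)).card = 4 ∧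
  (∃ C : AltCycle (mEdges A0 A1), C.edges = mEdges A0 A1) ∧
  labTailCount A0 A1 true true = labTailCount A0 A1 false true

section Aux

variable {V : Type*} [DecidableEq V]

lemma mem_mEdges_iff (A0 A1 : Finset (Hyperarc V)) (e : MEdge V) :
    e ∈ mEdges A0 A1 ↔
      (e.lab = true ∧ (e.tail, e.ends) ∈ A0 \ A1) ∨
      (e.lab = false ∧ (e.tail, e.ends) ∈ A1 \ A0) := by
  obtain ⟨l, tl, en⟩ := e
  simp only [mEdges, Finset.mem_union, Finset.mem_image, MEdge.mk.injEq]
  constructor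
  · rintro (⟨⟨x, y⟩, hx, h1, h2, h3⟩ | ⟨⟨x, y⟩, hx, h1, h2, h3⟩) <;> subst h1 h2 h3 <;>
      simp_all
  · rintro (⟨h1, h2⟩ | ⟨h1, h2⟩)
    · exact Or.inl ⟨(tl, en), h2, h1.symm, rfl, rfl⟩
    · exact Or.inr ⟨(tl, en), h2, h1.symm, rfl, rfl⟩

lemma mEdges_card (A0 A1 : Finset (Hyperarc V)) :
    (mEdges A0 A1).card = (A0 \ A1).card + (A1 \ A0).card := by
  unfold mEdges
  rw [Finset.card_union_of_disjoint, Finset.card_image_of_injective,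
    Finset.card_image_of_injective]
  · rintro ⟨x1, x2⟩ ⟨y1, y2⟩ h
    simp only [MEdge.mk.injEq] at h
    simp [Prod.ext_iff, h.1, h.2]
  · rintro ⟨x1, x2⟩ ⟨y1, y2⟩ h
    simp only [MEdge.mk.injEq] at h
    simp [Prod.ext_iff, h.1, h.2]
  · rw [Finset.disjoint_left]
    rintro e he he'
    simp only [Finset.mem_image] at he he'
    obtain ⟨x, -, rfl⟩ := he
    obtain ⟨y, -, h⟩ := he'
    simp at h

lemma card_filter_move {α : Type*} [DecidableEq α] {A S T : Finset α}
    (hS : S ⊆ A) (hT : Disjoint T A) {P : α → Prop} [DecidablePred P]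
    (h : (S.filter P).card = (T.filter P).card) :
    (((A \ S) ∪ T).filter P).card = (A.filter P).card := by
  have h1 : (A \ S).filter P = (A.filter P) \ (S.filter P) := by
    ext x; simp only [Finset.mem_filter, Finset.mem_sdiff]; tauto
  have h2 : Disjoint ((A \ S).filter P) (T.filter P) := by
    exact Finset.disjoint_filter_filter (Finset.disjoint_of_subset_left
      (Finset.sdiff_subset) hT.symm)
  have hsub : S.filter P ⊆ A.filter P := Finset.filter_subset_filter P hS
  rw [Finset.filter_union, Finset.card_union_of_disjoint h2, h1,
    Finset.card_sdiff_of_subset hsub]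
  have := Finset.card_le_card hsub
  omega

lemma card_filter_pair {α : Type*} [DecidableEq α] {x y : α} (hxy : x ≠ y)
    (P : α → Prop) [DecidablePred P] :
    (({x, y} : Finset α).filter P).card =
      (if P x then 1 else 0) + (if P y then 1 else 0) := by
  rw [show ({x, y} : Finset α) = insert x {y} from rfl, Finset.filter_insert,
    Finset.filter_singleton]
  split_ifs <;> simp_all [Finset.card_insert_of_notMem]

end Aux

/-- Case 4.1 of the proof of Lemma `connected_when_one_cycle`.
`M(H0 Δ H*)` has `k + 1 ≥ 5` edges and is exactly one minimal alternating cycle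
`C*` containing `e1 = {a,b}_{H0,t}`, `e2 = {b,c}_{H*,t}`, `e4 = {a,d}_{H0,s}`
and `e5 = {a,f}_{H*,u}` with `a,b,c,d,f` pairwise distinct.  If
`(u,{f,c}) ∈ A(H0) ∩ A(H*)`, then `H̃` with
`A(H̃) = (A(H0) \ {M⁻¹(e1), (u,{f,c})}) ∪ {M⁻¹(e2), M⁻¹(e5)}` satisfies
`H̃ ∈ H^stub_s(d)`, `E(M(H0 Δ H̃)) ≤ k` and `E(M(H̃ Δ H*)) = k − 1`. -/
theorem one_cycle_case4_1 {V : Type*} [DecidableEq V]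
    (D : DegreeSeq V) (A0 A1 : Finset (Hyperarc V))
    (h0 : Realizes A0 D) (h1 : Realizes A1 D) (k : ℕ)
    (hcard : (mEdges A0 A1).card = k + 1) (hk : 5 ≤ k + 1)
    (C : AltCycle (mEdges A0 A1)) (hmin : C.Minimal) (hall : C.edges = mEdges A0 A1)
    (a b c d f : V) (t s u : Tail)
    (hdist : ([a, b, c, d, f] : List V).Pairwise (· ≠ ·))
    (he1 : (⟨true, t, s(a, b)⟩ : MEdge V) ∈ C.edges)
    (he2 : (⟨false, t, s(b, c)⟩ : MEdge V) ∈ C.edges)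
    (he4 : (⟨true, s, s(a, d)⟩ : MEdge V) ∈ C.edges)
    (he5 : (⟨false, u, s(a, f)⟩ : MEdge V) ∈ C.edges)
    (he6 : (u, s(f, c)) ∈ A0 ∩ A1)
    (At : Finset (Hyperarc V))
    (hAt : At = (A0 \ {(t, s(a, b)), (u, s(f, c))}) ∪ {(t, s(b, c)), (u, s(a, f))}) :
    Realizes At D ∧ (mEdges A0 At).card ≤ k ∧ (mEdges At A1).card = k - 1 := by
  classical
  -- pairwise distinctness
  simp only [List.pairwise_cons, List.mem_cons, List.not_mem_nil, or_false,
    List.mem_singleton, List.Pairwise.nil, and_true, forall_eq_or_imp, forall_eq] at hdist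
  obtain ⟨⟨hab, hac, had, haf⟩, ⟨hbc, hbd, hbf⟩, ⟨hcd, hcf⟩, hdf⟩ := hdist
  -- membership facts for the four arcs
  rw [hall, mem_mEdges_iff] at he1 he2 he5
  simp only [Finset.mem_sdiff, Bool.true_eq_false, Bool.false_eq_true, false_and,
    or_false, false_or, true_and, and_true] at he1 he2 he5
  obtain ⟨hab0, hab1⟩ := he1
  obtain ⟨hbc1, hbc0⟩ := he2
  obtain ⟨haf1, haf0⟩ := he5
  rw [Finset.mem_inter] at he6
  obtain ⟨hfc0, hfc1⟩ := he6
  -- distinctness of the four arcs as elements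
  have hSne : ((t, s(a, b)) : Hyperarc V) ≠ (u, s(f, c)) := by
    intro h; rw [Prod.ext_iff] at h
    have := h.2; rw [Sym2.eq_iff] at this; tauto
  have hTne : ((t, s(b, c)) : Hyperarc V) ≠ (u, s(a, f)) := by
    intro h; rw [Prod.ext_iff] at h
    have := h.2; rw [Sym2.eq_iff] at this; tauto
  set S : Finset (Hyperarc V) := {(t, s(a, b)), (u, s(f, c))} with hS
  set T : Finset (Hyperarc V) := {(t, s(b, c)), (u, s(a, f))} with hT
  have hSsub : S ⊆ A0 := by
    intro x hx
    simp only [hS, Finset.mem_insert, Finset.mem_singleton] at hx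
    rcases hx with rfl | rfl
    · exact hab0
    · exact hfc0
  have hTdisj : Disjoint T A0 := by
    rw [Finset.disjoint_left]
    intro x hx
    simp only [hT, Finset.mem_insert, Finset.mem_singleton] at hx
    rcases hx with rfl | rfl
    · exact hbc0
    · exact haf0
  have hSmem : ∀ x, x ∈ S ↔ x = (t, s(a, b)) ∨ x = (u, s(f, c)) := by
    intro x; simp [hS]
  have hTmem : ∀ x, x ∈ T ↔ x = (t, s(b, c)) ∨ x = (u, s(a, f)) := by
    intro x; simp [hT]
  have hAt' : At = (A0 \ S) ∪ T := hAt
  -- Realizes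
  have hReal : Realizes At D := by
    refine ⟨?_, ?_, ?_⟩
    · intro e he
      rw [hAt', Finset.mem_union, Finset.mem_sdiff] at he
      rcases he with ⟨he, -⟩ | he
      · exact h0.1 e he
      · rw [hTmem] at he
        rcases he with rfl | rfl <;> simp [Sym2.mk_isDiag_iff] <;> assumption
    · intro v
      rw [hAt', card_filter_move hSsub hTdisj, h0.2.1]
      rw [hS, hT, card_filter_pair hSne, card_filter_pair hTne]
      simp only [Sym2.mem_iff]
      by_cases h1 : v = a <;> by_cases h2 : v = b <;> by_cases h3 : v = c <;>
        by_cases h4 : v = f <;> simp_all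
    · intro t'
      rw [hAt', card_filter_move hSsub hTdisj, h0.2.2]
      rw [hS, hT, card_filter_pair hSne, card_filter_pair hTne]
  -- counting |A0 \ A1| and |A1 \ A0|
  have hTsub1 : T ⊆ A1 \ A0 := by
    intro x hx; rw [hTmem] at hx
    rcases hx with rfl | rfl <;> simp_all [Finset.mem_sdiff]
  have hTcard : T.card = 2 := by
    rw [hT, Finset.card_insert_of_notMem (by simp [hTne]), Finset.card_singleton]
  have hScard : S.card = 2 := by
    rw [hS, Finset.card_insert_of_notMem (by simp [hSne]), Finset.card_singleton]
  have hsum : (A0 \ A1).card + (A1 \ A0).card = k + 1 := by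
    rw [← mEdges_card]; exact hcard
  have hmemab : ((t, s(a, b)) : Hyperarc V) ∈ A0 \ A1 := by
    simp [Finset.mem_sdiff, hab0, hab1]
  have h1le : 1 ≤ (A0 \ A1).card := Finset.card_pos.mpr ⟨_, hmemab⟩
  have h2le : 2 ≤ (A1 \ A0).card := hTcard ▸ Finset.card_le_card hTsub1
  -- |mEdges A0 At| = 4
  refine ⟨hReal, ?_, ?_⟩
  · have hd1 : A0 \ At = S := by
      ext x
      rw [hAt']
      simp only [Finset.mem_sdiff, Finset.mem_union, not_or, not_and, not_not]
      constructor
      · rintro ⟨hx0, hxS, hxT⟩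
        exact hxS hx0
      · intro hxS
        refine ⟨hSsub hxS, fun _ => hxS, fun hxT => ?_⟩
        rw [hSmem] at hxS; rw [hTmem] at hxT
        rcases hxS with rfl | rfl <;> rcases hxT with h | h <;>
          rw [Prod.ext_iff, Sym2.eq_iff] at h <;>
          obtain ⟨h1, (⟨h2, h3⟩ | ⟨h2, h3⟩)⟩ := h <;> simp_all
    have hd2 : At \ A0 = T := by
      ext x
      rw [hAt']
      simp only [Finset.mem_sdiff, Finset.mem_union]
      constructor
      · rintro ⟨hx1 | hxT, hx0⟩
        · exact absurd hx1.1 hx0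
        · exact hxT
      · intro hxT
        exact ⟨Or.inr hxT, Finset.disjoint_left.mp hTdisj hxT⟩
    rw [mEdges_card, hd1, hd2, hScard, hTcard]
    omega
  -- |mEdges At A1| = k - 1
  · have hd1 : At \ A1 = (A0 \ A1).erase (t, s(a, b)) := by
      ext x
      rw [hAt']
      simp only [Finset.mem_sdiff, Finset.mem_union, Finset.mem_erase]
      constructor
      · rintro ⟨⟨hx0, hxS⟩ | hxT, hx1⟩
        · refine ⟨fun h => hxS ?_, hx0, hx1⟩
          rw [hSmem]; exact Or.inl h
        · rw [hTmem] at hxT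
          rcases hxT with rfl | rfl <;> [exact absurd hbc1 hx1; exact absurd haf1 hx1]
      · rintro ⟨hne, hx0, hx1⟩
        refine ⟨Or.inl ⟨hx0, fun hxS => ?_⟩, hx1⟩
        rw [hSmem] at hxS
        rcases hxS with h | rfl
        · exact hne h
        · exact hx1 hfc1
    have hd2 : A1 \ At = insert (u, s(f, c)) ((A1 \ A0) \ T) := by
      ext x
      rw [hAt']
      simp only [Finset.mem_sdiff, Finset.mem_union, Finset.mem_insert, not_or,
        not_and, not_not]
      constructor
      · rintro ⟨hx1, hx, hxT⟩
        by_cases hx0 : x ∈ A0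
        · left
          have := hx hx0
          rw [hSmem] at this
          rcases this with rfl | rfl
          · exact absurd hab1 (by simpa using hx1)
          · rfl
        · exact Or.inr ⟨⟨hx1, hx0⟩, hxT⟩
      · rintro (rfl | ⟨⟨hx1, hx0⟩, hxT⟩)
        · refine ⟨hfc1, fun _ => ?_, fun hxT => ?_⟩
          · rw [hSmem]; exact Or.inr rfl
          · rw [hTmem] at hxT
            rcases hxT with h | h <;> rw [Prod.ext_iff, Sym2.eq_iff] at h <;>
              obtain ⟨h1, (⟨h2, h3⟩ | ⟨h2, h3⟩)⟩ := h <;> simp_all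
        · exact ⟨hx1, fun h => absurd h hx0, hxT⟩
    have hnm : ((u, s(f, c)) : Hyperarc V) ∉ (A1 \ A0) \ T := by
      simp [Finset.mem_sdiff, hfc0]
    rw [mEdges_card, hd1, hd2, Finset.card_erase_of_mem hmemab,
      Finset.card_insert_of_notMem hnm, Finset.card_sdiff_of_subset hTsub1, hTcard]
    omega
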